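/- Assume Σ is positive definite with Cholesky decomposition Σ = Ω^T Ω and that f_t, g_t, m_t are Lipschitz with constants L_f, L_g, L_m for all t ∈ [T]. Let φ_{≤T} : (R^n)^T → (R^n)^T be the bijection sending the noise sequence w_{≤T} to the comparison-process states y_{≤T} defined by y_t = m_t(y_{<t}) + w_t (so y_{≤T} = φ_{≤T}(w_{≤T}) if and only if y_{≤T} − m_{≤T}(y_{<T}) = w_{≤T}). Then φ_{≤T} is Lipschitz continuous with Lip(φ_{≤T}) ≤ √T (1 + L_m)^{T−1}; consequently, writing W = Z Ω where Z ∈ R^{n×T} has independent standard Gaussian entries, the matrix Y of comparison-process states is a Lipschitz function of Z with Lipschitz constant at most √T (1 + L_m)^{T−1} ‖Ω‖_op (with respect to Frobenius norms). -/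

import Mathlib

/-!
Write `Δ_t = y_t - y'_t` and `ε_t = w_t - w'_t` for two noise sequences. Since
`y_t = m_t(y_{<t}) + w_t`, we get `‖Δ_t‖ ≤ L_m ‖Δ_{<t}‖ + ‖ε_t‖`, so the prefix norms obey
`‖Δ_{≤t}‖ ≤ (1 + L_m) ‖Δ_{<t}‖ + ‖ε_t‖`. This discrete Grönwall recursion gives
`‖Δ_{≤T}‖ ≤ (1 + L_m)^{T-1} ∑_t ‖ε_t‖`, and Cauchy–Schwarz turns the sum into `√T ‖ε‖`.
For the matrix form, `W = Z Ω` and, row by row, `‖(Z - Z') Ω‖_F ≤ ‖Ω‖_op ‖Z - Z'‖_F`.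
-/

open MeasureTheory Matrix Finset

noncomputable section

/-- Euclidean norm of a finitely-indexed real vector. -/
def enorm' {ι : Type*} [Fintype ι] (v : ι → ℝ) : ℝ := Real.sqrt (∑ i, v i ^ 2)

/-- Frobenius norm of a real matrix. -/
def frob {ι κ : Type*} [Fintype ι] [Fintype κ] (M : Matrix ι κ ℝ) : ℝ :=
  Real.sqrt (∑ i, ∑ j, M i j ^ 2)

/-- Spectral (Euclidean operator) norm of a real matrix. -/
def opNorm {ι κ : Type*} [Fintype ι] [Fintype κ] (M : Matrix ι κ ℝ) : ℝ :=
  sSup ((fun v => enorm' (M.mulVec v)) '' {v | enorm' v ≤ 1})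

/-- `L`-Lipschitz continuity for a function of a stacked history, with respect to the
Euclidean (ℓ²) norms. -/
def LipStack {n k : ℕ} (L : ℝ) (f : (Fin k → (Fin n → ℝ)) → (Fin n → ℝ)) : Prop :=
  ∀ a b, enorm' (f a - f b) ≤ L * Real.sqrt (∑ s, enorm' (a s - b s) ^ 2)

/-- The comparison-process states built from the noise `w`: `y_t = m_t(y_{<t}) + w_t`.
This is the map `φ_{≤T}`. -/
def seqY {n T : ℕ} (m : ∀ t : Fin T, (Fin t.1 → (Fin n → ℝ)) → (Fin n → ℝ))
    (w : Fin T → (Fin n → ℝ)) : Fin T → (Fin n → ℝ) :=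
  fun t => m t (fun s => seqY m w ⟨s.1, s.2.trans t.isLt⟩) + w t
termination_by t => t.1
decreasing_by exact s.2

open scoped Matrix.Norms.L2Operator

section Norms

variable {ι κ ν : Type*} [Fintype ι] [Fintype κ] [Fintype ν]

lemma enorm'_eq_norm (v : ι → ℝ) : enorm' v = ‖WithLp.toLp 2 v‖ := by
  simp [enorm', EuclideanSpace.norm_eq]

lemma enorm'_sq (v : ι → ℝ) : enorm' v ^ 2 = ∑ i, v i ^ 2 :=
  Real.sq_sqrt (by positivity)

lemma enorm'_nonneg (v : ι → ℝ) : 0 ≤ enorm' v :=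
  Real.sqrt_nonneg _

lemma enorm'_add_le (u v : ι → ℝ) : enorm' (u + v) ≤ enorm' u + enorm' v := by
  simp only [enorm'_eq_norm, WithLp.toLp_add, norm_add_le]

lemma opNorm_eq_l2_opNorm [DecidableEq κ] (M : Matrix ι κ ℝ) : opNorm M = ‖M‖ := by
  have hball :
      Metric.closedBall (0 : EuclideanSpace ℝ κ) 1 = WithLp.toLp 2 '' {v | enorm' v ≤ 1} := by
    ext x
    simp only [Metric.mem_closedBall, dist_zero_right, Set.mem_image, Set.mem_ofPred_eq,
      enorm'_eq_norm]
    exact ⟨fun hx => ⟨x.ofLp, hx, rfl⟩, by rintro ⟨y, hy, rfl⟩; exact hy⟩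
  rw [l2_opNorm_def, ← ContinuousLinearMap.sSup_unitClosedBall_eq_norm, hball, Set.image_image,
    opNorm]
  simp [enorm'_eq_norm]

lemma opNorm_nonneg (M : Matrix ι κ ℝ) : 0 ≤ opNorm M := by
  classical
  exact (opNorm_eq_l2_opNorm M).symm ▸ norm_nonneg M

lemma enorm'_mulVec_le (M : Matrix ι κ ℝ) (v : κ → ℝ) :
    enorm' (M *ᵥ v) ≤ opNorm M * enorm' v := by
  classical
  rw [opNorm_eq_l2_opNorm, enorm'_eq_norm, enorm'_eq_norm]
  exact M.l2_opNorm_mulVec (WithLp.toLp 2 v)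

lemma opNorm_transpose (M : Matrix ι κ ℝ) : opNorm Mᵀ = opNorm M := by
  classical
  rw [opNorm_eq_l2_opNorm, opNorm_eq_l2_opNorm, ← conjTranspose_eq_transpose_of_trivial,
    l2_opNorm_conjTranspose]

lemma frob_eq_sqrt_sum_sq_enorm' (M : Matrix ι κ ℝ) :
    frob M = √(∑ i, enorm' (M i) ^ 2) := by
  simp only [frob, enorm'_sq]

lemma frob_transpose (M : Matrix ι κ ℝ) : frob Mᵀ = frob M := by
  rw [frob, frob, Finset.sum_comm]
  rfl

lemma frob_mul_le (A : Matrix ι κ ℝ) (B : Matrix κ ν ℝ) :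
    frob (A * B) ≤ opNorm B * frob A := by
  have hrow (i : ι) : enorm' ((A * B) i) ≤ opNorm B * enorm' (A i) := by
    rw [← opNorm_transpose, mul_apply_eq_vecMul, ← mulVec_transpose]
    exact enorm'_mulVec_le _ _
  rw [frob_eq_sqrt_sum_sq_enorm', frob_eq_sqrt_sum_sq_enorm', ← Real.sqrt_sq (opNorm_nonneg B),
    ← Real.sqrt_mul (sq_nonneg _), mul_sum]
  gcongr with i
  calc enorm' ((A * B) i) ^ 2 ≤ (opNorm B * enorm' (A i)) ^ 2 :=
        pow_le_pow_left₀ (Real.sqrt_nonneg _) (hrow i) 2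
    _ = _ := mul_pow ..

end Norms

lemma sum_le_sqrt_card_mul_sqrt_sum_sq {ι : Type*} (s : Finset ι) (f : ι → ℝ) :
    ∑ i ∈ s, f i ≤ √(#s) * √(∑ i ∈ s, f i ^ 2) := by
  rw [← Real.sqrt_mul (Nat.cast_nonneg _)]
  exact (le_abs_self _).trans (Real.abs_le_sqrt (sq_sum_le_card_mul_sum_sq))

theorem sqrt_sum_range_succ_sq_le_gronwall {L : ℝ} (hL : 0 ≤ L) {d e : ℕ → ℝ}
    (hd : ∀ k, 0 ≤ d k) (he : ∀ k, 0 ≤ e k)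
    (h : ∀ k, d k ≤ L * √(∑ s ∈ range k, d s ^ 2) + e k) (k : ℕ) :
    √(∑ s ∈ range (k + 1), d s ^ 2) ≤ (1 + L) ^ k * ∑ s ∈ range (k + 1), e s := by
  induction k with
  | zero => simpa [Real.sqrt_sq (hd 0)] using h 0
  | succ k ih =>
    set S := √(∑ s ∈ range (k + 1), d s ^ 2)
    have hS : 0 ≤ S := Real.sqrt_nonneg _
    have hstep : √(∑ s ∈ range (k + 2), d s ^ 2) ≤ S + d (k + 1) := by
      rw [sum_range_succ, Real.sqrt_le_iff]
      have hS_sq : S ^ 2 = ∑ s ∈ range (k + 1), d s ^ 2 :=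
        Real.sq_sqrt (sum_nonneg fun s _ => sq_nonneg (d s))
      constructor <;> nlinarith [hd (k + 1)]
    have hpow : 1 ≤ (1 + L) ^ (k + 1) := one_le_pow₀ (by linarith)
    calc √(∑ s ∈ range (k + 2), d s ^ 2)
        ≤ (1 + L) * S + e (k + 1) := by linarith [h (k + 1)]
      _ ≤ (1 + L) * ((1 + L) ^ k * ∑ s ∈ range (k + 1), e s) +
            (1 + L) ^ (k + 1) * e (k + 1) := by
        gcongr
        exact le_mul_of_one_le_left (he _) hpow
      _ = (1 + L) ^ (k + 1) * ∑ s ∈ range (k + 2), e s := by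
        rw [sum_range_succ _ (k + 1)]; ring

theorem sqrt_sum_sq_le_gronwall {T : ℕ} {L : ℝ} (hL : 0 ≤ L) {d e : Fin T → ℝ}
    (hd : ∀ t, 0 ≤ d t) (he : ∀ t, 0 ≤ e t)
    (h : ∀ t : Fin T, d t ≤ L * √(∑ s : Fin t, d ⟨s, s.2.trans t.2⟩ ^ 2) + e t) :
    √(∑ t, d t ^ 2) ≤ √T * (1 + L) ^ (T - 1) * √(∑ t, e t ^ 2) := by
  let D k := if hk : k < T then d ⟨k, hk⟩ else 0
  let E k := if hk : k < T then e ⟨k, hk⟩ else 0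
  have hD (t : Fin T) : D t = d t := dif_pos t.2
  have hE (t : Fin T) : E t = e t := dif_pos t.2
  have hDE : ∀ k, D k ≤ L * √(∑ s ∈ range k, D s ^ 2) + E k := by
    intro k
    by_cases hk : k < T
    · have hsum : ∑ s ∈ range k, D s ^ 2 = ∑ s : Fin k, d ⟨s, s.2.trans hk⟩ ^ 2 := by
        rw [← Fin.sum_univ_eq_sum_range]
        exact sum_congr rfl fun s _ => by simp only [D, dif_pos (s.2.trans hk)]
      simpa only [D, E, dif_pos hk, hsum] using h ⟨k, hk⟩
    · simp only [D, E, dif_neg hk]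
      positivity
  have hD0 k : 0 ≤ D k := by unfold D; split_ifs; exacts [hd _, le_rfl]
  have hE0 k : 0 ≤ E k := by unfold E; split_ifs; exacts [he _, le_rfl]
  simp_rw [← hD, ← hE, Fin.sum_univ_eq_sum_range (fun s => D s ^ 2),
    Fin.sum_univ_eq_sum_range (fun s => E s ^ 2)]
  cases T with
  | zero => simp
  | succ k =>
    calc √(∑ s ∈ range (k + 1), D s ^ 2)
        ≤ (1 + L) ^ k * ∑ s ∈ range (k + 1), E s :=
          sqrt_sum_range_succ_sq_le_gronwall hL hD0 hE0 hDE k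
      _ ≤ (1 + L) ^ k * (√(k + 1 : ℕ) * √(∑ s ∈ range (k + 1), E s ^ 2)) := by
          gcongr
          simpa using sum_le_sqrt_card_mul_sqrt_sum_sq (range (k + 1)) E
      _ = _ := by rw [Nat.add_sub_cancel]; ring

section ComparisonProcess

variable {n T : ℕ} (m : ∀ t : Fin T, (Fin t.1 → (Fin n → ℝ)) → (Fin n → ℝ))

lemma seqY_apply (w : Fin T → (Fin n → ℝ)) (t : Fin T) :
    seqY m w t = m t (fun s => seqY m w ⟨s, s.2.trans t.2⟩) + w t := by
  rw [seqY]

variable {m}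

lemma enorm'_seqY_sub_le {L : ℝ} (hm : ∀ t, LipStack L (m t)) (w w' : Fin T → (Fin n → ℝ))
    (t : Fin T) :
    enorm' (seqY m w t - seqY m w' t) ≤
      L * √(∑ s : Fin t,
          enorm' (seqY m w ⟨s, s.2.trans t.2⟩ - seqY m w' ⟨s, s.2.trans t.2⟩) ^ 2) +
        enorm' (w t - w' t) := by
  rw [seqY_apply m w, seqY_apply m w', add_sub_add_comm]
  exact (enorm'_add_le _ _).trans (add_le_add_left (hm t _ _) _)

theorem sqrt_sum_sq_enorm'_seqY_sub_le {L : ℝ} (hL : 0 ≤ L) (hm : ∀ t, LipStack L (m t))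
    (w w' : Fin T → (Fin n → ℝ)) :
    √(∑ t, enorm' (seqY m w t - seqY m w' t) ^ 2) ≤
      √T * (1 + L) ^ (T - 1) * √(∑ t, enorm' (w t - w' t) ^ 2) :=
  sqrt_sum_sq_le_gronwall hL (fun _ => enorm'_nonneg _) (fun _ => enorm'_nonneg _)
    (enorm'_seqY_sub_le hm w w')

end ComparisonProcess

theorem comparison_change_of_variables_general {n T : ℕ}
    (m : ∀ t : Fin T, (Fin t.1 → (Fin n → ℝ)) → (Fin n → ℝ))
    (Ω : Matrix (Fin T) (Fin T) ℝ)
    (Lm : ℝ) (hLm0 : 0 ≤ Lm)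
    (hm : ∀ t, LipStack Lm (m t)) :
    (∀ w w' : Fin T → (Fin n → ℝ),
      Real.sqrt (∑ t, enorm' (seqY m w t - seqY m w' t) ^ 2) ≤
        Real.sqrt T * (1 + Lm) ^ (T - 1) *
          Real.sqrt (∑ t, enorm' (w t - w' t) ^ 2)) ∧
    (∀ Z Z' : Matrix (Fin n) (Fin T) ℝ,
      frob (Matrix.of fun i t =>
          seqY m (fun t' i' => ∑ s, Z i' s * Ω s t') t i -
            seqY m (fun t' i' => ∑ s, Z' i' s * Ω s t') t i) ≤
        Real.sqrt T * (1 + Lm) ^ (T - 1) * opNorm Ω * frob (Z - Z')) := by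
  have hφ := sqrt_sum_sq_enorm'_seqY_sub_le hLm0 hm
  refine ⟨hφ, fun Z Z' => ?_⟩
  set w : Fin T → (Fin n → ℝ) := fun t' i' => ∑ s, Z i' s * Ω s t'
  set w' : Fin T → (Fin n → ℝ) := fun t' i' => ∑ s, Z' i' s * Ω s t'
  have hnoise : ∀ t, w t - w' t = ((Z - Z') * Ω)ᵀ t := fun t => by
    ext i
    simp [w, w', Matrix.mul_apply, sub_mul]
  calc frob (Matrix.of fun i t => seqY m w t i - seqY m w' t i)
      = √(∑ t, enorm' (seqY m w t - seqY m w' t) ^ 2) :=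
        (frob_transpose _).symm.trans (frob_eq_sqrt_sum_sq_enorm' _)
    _ ≤ √T * (1 + Lm) ^ (T - 1) * √(∑ t, enorm' (w t - w' t) ^ 2) := hφ w w'
    _ = √T * (1 + Lm) ^ (T - 1) * frob ((Z - Z') * Ω) := by
        simp only [hnoise, ← frob_eq_sqrt_sum_sq_enorm', frob_transpose]
    _ ≤ √T * (1 + Lm) ^ (T - 1) * (opNorm Ω * frob (Z - Z')) := by
        gcongr; exact frob_mul_le _ _
    _ = √T * (1 + Lm) ^ (T - 1) * opNorm Ω * frob (Z - Z') := by ring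

/-- **Lipschitz change of variables for the comparison process** (eq. (24) in the proof of
Theorem 5). Assume `Σ = Ωᵀ Ω` is positive definite and `f_t, g_t, m_t` are Lipschitz with
constants `L_f, L_g, L_m`. Then the bijection `φ_{≤T}` sending the noise `w_{≤T}` to the
states `y_{≤T}` satisfies `Lip(φ_{≤T}) ≤ √T (1 + L_m)^{T−1}`; consequently, with `W = Z Ω`,
the state matrix `Y` is a Lipschitz function of `Z` with constant
`√T (1 + L_m)^{T−1} ‖Ω‖_op` (Frobenius norms). -/
theorem comparison_change_of_variables {n T : ℕ}
    (f g m : ∀ t : Fin T, (Fin t.1 → (Fin n → ℝ)) → (Fin n → ℝ))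
    (Sig Ω : Matrix (Fin T) (Fin T) ℝ)
    (hSig : Sig.PosDef) (hChol : Ωᵀ * Ω = Sig)
    (hCholUp : ∀ i j : Fin T, j < i → Ω i j = 0) (hCholDiag : ∀ i, 0 ≤ Ω i i)
    (Lf Lg Lm : ℝ) (hLm0 : 0 ≤ Lm)
    (hf : ∀ t, LipStack Lf (f t)) (hg : ∀ t, LipStack Lg (g t))
    (hm : ∀ t, LipStack Lm (m t)) :
    (∀ w w' : Fin T → (Fin n → ℝ),
      Real.sqrt (∑ t, enorm' (seqY m w t - seqY m w' t) ^ 2) ≤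
        Real.sqrt T * (1 + Lm) ^ (T - 1) *
          Real.sqrt (∑ t, enorm' (w t - w' t) ^ 2)) ∧
    (∀ Z Z' : Matrix (Fin n) (Fin T) ℝ,
      frob (Matrix.of fun i t =>
          seqY m (fun t' i' => ∑ s, Z i' s * Ω s t') t i -
            seqY m (fun t' i' => ∑ s, Z' i' s * Ω s t') t i) ≤
        Real.sqrt T * (1 + Lm) ^ (T - 1) * opNorm Ω * frob (Z - Z')) :=
  comparison_change_of_variables_general m Ω Lm hLm0 hm

end
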